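/- arXiv:0907.0537 — 3 statements merged into one kernel-verified Lean document; each statement's English description precedes it below -/
import Mathlib

section
/- For all N ≥ 2 and all integers k with 1 ≤ k ≤ N/2, one has (1 - π²/12) k² ≤ sin²(kπ/N)/sin²(π/N) ≤ k² / (1 - π²/(3N²)). -/
/-!
Put `y = π / N`, so that `kπ / N = k y ∈ [0, π / 2]`. Jordan's inequality
`sin (k y) ≥ (2 / π) k y` together with `sin y ≤ y` bounds the ratio below by `4 k² / π²`, and
`4 / π² ≥ 1 - π² / 12` because `π⁴ - 12 π² + 48 = (π² - 6)² + 12 > 0`. Conversely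
`sin (k y) ≤ k y`, and squaring `sin y ≥ y - y³ / 6` gives `sin² y ≥ y² (1 - y² / 3)`.
-/

open Real

lemma sq_mul_one_sub_sq_div_three_le_sin_sq (y : ℝ) : y ^ 2 * (1 - y ^ 2 / 3) ≤ sin y ^ 2 := by
  wlog hy : 0 ≤ y generalizing y
  · simpa only [neg_sq, sin_neg] using this (-y) (by linarith)
  rcases le_total (y ^ 2) 3 with hy3 | hy3
  · have hcube : 0 ≤ y - y ^ 3 / 6 := by nlinarith
    calc y ^ 2 * (1 - y ^ 2 / 3) ≤ (y - y ^ 3 / 6) ^ 2 := by nlinarith [pow_nonneg hy 6]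
      _ ≤ sin y ^ 2 := pow_le_pow_left₀ hcube (sin_ge_sub_cube hy) 2
  · nlinarith [sq_nonneg (sin y)]

lemma sin_mul_sq_div_sin_sq_le (k y : ℝ) (hy : y ≠ 0) (hy3 : y ^ 2 < 3) :
    sin (k * y) ^ 2 / sin y ^ 2 ≤ k ^ 2 / (1 - y ^ 2 / 3) := by
  have hy2 : 0 < y ^ 2 := sq_pos_of_ne_zero hy
  calc sin (k * y) ^ 2 / sin y ^ 2 ≤ (k * y) ^ 2 / (y ^ 2 * (1 - y ^ 2 / 3)) :=
        div_le_div₀ (sq_nonneg _) sin_sq_le_sq (by nlinarith)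
          (sq_mul_one_sub_sq_div_three_le_sin_sq y)
    _ = k ^ 2 / (1 - y ^ 2 / 3) := by
        rw [mul_pow, mul_comm (y ^ 2), mul_div_mul_right _ _ hy2.ne']

lemma four_div_pi_sq_mul_sq_le_sin_mul_sq_div_sin_sq (k y : ℝ) (hy : sin y ≠ 0)
    (hky : 0 ≤ k * y) (hky' : k * y ≤ π / 2) :
    4 / π ^ 2 * k ^ 2 ≤ sin (k * y) ^ 2 / sin y ^ 2 := by
  have hy0 : y ≠ 0 := by rintro rfl; exact hy sin_zero
  calc 4 / π ^ 2 * k ^ 2 = (2 / π * (k * y)) ^ 2 / y ^ 2 := by field_simp; ring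
    _ ≤ sin (k * y) ^ 2 / sin y ^ 2 :=
        div_le_div₀ (sq_nonneg _) (pow_le_pow_left₀ (by positivity) (mul_le_sin hky hky') 2)
          (sq_pos_of_ne_zero hy) sin_sq_le_sq

lemma one_sub_pi_sq_div_twelve_le_four_div_pi_sq : 1 - π ^ 2 / 12 ≤ 4 / π ^ 2 := by
  rw [le_div_iff₀ (by positivity)]
  nlinarith [sq_nonneg (π ^ 2 - 6)]

theorem eigenvalue_ratio_bounds_general (N k : ℕ) (hN : 2 ≤ N)
    (hkN : (k : ℝ) ≤ N / 2) :
    (1 - Real.pi ^ 2 / 12) * (k : ℝ) ^ 2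
      ≤ Real.sin (k * Real.pi / N) ^ 2 / Real.sin (Real.pi / N) ^ 2 ∧
    Real.sin (k * Real.pi / N) ^ 2 / Real.sin (Real.pi / N) ^ 2
      ≤ (k : ℝ) ^ 2 / (1 - Real.pi ^ 2 / (3 * (N : ℝ) ^ 2)) := by
  have hN2 : (2 : ℝ) ≤ N := by exact_mod_cast hN
  have hy : π / N ≠ 0 := by positivity
  have hsin : sin (π / N) ≠ 0 :=
    (sin_pos_of_pos_of_lt_pi (by positivity) (div_lt_self pi_pos (by linarith))).ne'
  have hky : k * (π / N) ≤ π / 2 := by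
    rw [← mul_div_assoc, div_le_div_iff₀ (by positivity) two_pos]
    nlinarith [pi_pos]
  have hy3 : (π / N) ^ 2 < 3 := by
    rw [div_pow, div_lt_iff₀ (by positivity)]
    nlinarith [pi_lt_d2, pi_pos]
  rw [mul_div_assoc, show π ^ 2 / (3 * (N : ℝ) ^ 2) = (π / N) ^ 2 / 3 by ring]
  exact ⟨(mul_le_mul_of_nonneg_right one_sub_pi_sq_div_twelve_le_four_div_pi_sq
      (sq_nonneg _)).trans
      (four_div_pi_sq_mul_sq_le_sin_mul_sq_div_sin_sq _ _ hsin (by positivity) hky),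
    sin_mul_sq_div_sin_sq_le _ _ hy hy3⟩

/-- For all `N ≥ 2` and integers `1 ≤ k ≤ N/2`,
`(1 - π²/12) k² ≤ sin²(kπ/N)/sin²(π/N) ≤ k² / (1 - π²/(3N²))`. -/
theorem eigenvalue_ratio_bounds (N k : ℕ) (hN : 2 ≤ N) (hk : 1 ≤ k)
    (hkN : (k : ℝ) ≤ N / 2) :
    (1 - Real.pi ^ 2 / 12) * (k : ℝ) ^ 2
      ≤ Real.sin (k * Real.pi / N) ^ 2 / Real.sin (Real.pi / N) ^ 2 ∧
    Real.sin (k * Real.pi / N) ^ 2 / Real.sin (Real.pi / N) ^ 2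
      ≤ (k : ℝ) ^ 2 / (1 - Real.pi ^ 2 / (3 * (N : ℝ) ^ 2)) :=
  eigenvalue_ratio_bounds_general N k hN hkN
end

section
/- For all N ≥ 2 and all integers k with 1 ≤ k ≤ N/2, one has -k⁴π²/(3N²) ≤ sin²(kπ/N)/sin²(π/N) - k² ≤ k²π²/N². -/
/-!
The upper bound is `|sin (k x)| ≤ k |sin x|`, which makes the ratio at most `k²`.
For the lower bound, `x² - x⁴/3 ≤ sin² x` for every real `x` (square the cubic Taylor bound
`|x| - |x|³/6 ≤ |sin x|`); applied at `x = kπ/N` and combined with `sin² (π/N) ≤ (π/N)²` it gives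
`sin² (kπ/N) / sin² (π/N) ≥ k² - k⁴π²/(3N²)`.
-/

open Real

lemma abs_sin_nat_mul_le (n : ℕ) (x : ℝ) : |sin (n * x)| ≤ n * |sin x| := by
  induction n with
  | zero => simp
  | succ m ih =>
    rw [Nat.cast_succ, add_one_mul]
    calc |sin (m * x + x)|
        ≤ |sin (m * x)| * |cos x| + |cos (m * x)| * |sin x| := by
          rw [sin_add, ← abs_mul, ← abs_mul]; exact abs_add_le _ _
      _ ≤ |sin (m * x)| * 1 + 1 * |sin x| := by
          gcongr
          exacts [abs_cos_le_one x, abs_cos_le_one _]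
      _ ≤ (m + 1) * |sin x| := by linarith

lemma sin_nat_mul_sq_div_sin_sq_le (n : ℕ) (x : ℝ) : sin (n * x) ^ 2 / sin x ^ 2 ≤ n ^ 2 := by
  refine div_le_of_le_mul₀ (sq_nonneg _) (sq_nonneg _) ?_
  rw [← sq_abs, ← sq_abs (sin x), ← mul_pow]
  exact pow_le_pow_left₀ (abs_nonneg _) (abs_sin_nat_mul_le n x) 2

lemma sq_sub_pow_four_div_three_le_sin_sq (x : ℝ) : x ^ 2 - x ^ 4 / 3 ≤ sin x ^ 2 := by
  have hx2 : |x| ^ 2 = x ^ 2 := sq_abs x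
  have hcubic : |x| - |x| ^ 3 / 6 ≤ |sin x| := by
    linarith [abs_sub_sin_le x, abs_sub_abs_le_abs_sub x (sin x)]
  rcases le_or_gt 0 (|x| - |x| ^ 3 / 6) with hpos | hneg
  · calc x ^ 2 - x ^ 4 / 3 ≤ (|x| - |x| ^ 3 / 6) ^ 2 := by nlinarith [sq_nonneg (|x| ^ 3)]
      _ ≤ |sin x| ^ 2 := pow_le_pow_left₀ hpos hcubic 2
      _ = sin x ^ 2 := sq_abs _
  · have hlarge : 6 < x ^ 2 := by nlinarith [abs_nonneg x]
    nlinarith [sq_nonneg (sin x)]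

lemma sq_sub_le_sin_mul_sq_div_sin_sq (K : ℝ) {θ : ℝ} (hθ : sin θ ≠ 0) :
    K ^ 2 - K ^ 4 * θ ^ 2 / 3 ≤ sin (K * θ) ^ 2 / sin θ ^ 2 := by
  have hθ0 : θ ≠ 0 := by rintro rfl; simp at hθ
  have hsin : 0 < sin θ ^ 2 := by positivity
  have hquot : K ^ 2 - K ^ 4 * θ ^ 2 / 3 = ((K * θ) ^ 2 - (K * θ) ^ 4 / 3) / θ ^ 2 := by
    field_simp
  rw [hquot]
  rcases le_or_gt ((K * θ) ^ 2 - (K * θ) ^ 4 / 3) 0 with hnonpos | hpos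
  · exact (div_nonpos_of_nonpos_of_nonneg hnonpos (sq_nonneg θ)).trans (by positivity)
  · calc ((K * θ) ^ 2 - (K * θ) ^ 4 / 3) / θ ^ 2
        ≤ ((K * θ) ^ 2 - (K * θ) ^ 4 / 3) / sin θ ^ 2 :=
          div_le_div_of_nonneg_left hpos.le hsin sin_sq_le_sq
      _ ≤ sin (K * θ) ^ 2 / sin θ ^ 2 := by
          gcongr; exact sq_sub_pow_four_div_three_le_sin_sq _

theorem eigenvalue_ratio_error_bounds_general (N k : ℕ) (hk : 1 ≤ k)
    (hkN : (k : ℝ) ≤ N / 2) :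
    -((k : ℝ) ^ 4 * Real.pi ^ 2 / (3 * (N : ℝ) ^ 2))
      ≤ Real.sin (k * Real.pi / N) ^ 2 / Real.sin (Real.pi / N) ^ 2 - (k : ℝ) ^ 2 ∧
    Real.sin (k * Real.pi / N) ^ 2 / Real.sin (Real.pi / N) ^ 2 - (k : ℝ) ^ 2
      ≤ (k : ℝ) ^ 2 * Real.pi ^ 2 / (N : ℝ) ^ 2 := by
  have hN : (2 : ℝ) ≤ N := by
    have : (1 : ℝ) ≤ k := by exact_mod_cast hk
    linarith
  have hsin : sin (π / N) ≠ 0 :=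
    (sin_pos_of_pos_of_lt_pi (by positivity) (div_lt_self pi_pos (by linarith))).ne'
  rw [show (k : ℝ) * π / N = k * (π / N) from mul_div_assoc _ _ _]
  constructor
  · have hlower := sq_sub_le_sin_mul_sq_div_sin_sq k hsin
    have hexpand : (k : ℝ) ^ 4 * (π / N) ^ 2 / 3 = k ^ 4 * π ^ 2 / (3 * N ^ 2) := by ring
    linarith
  · linarith [sin_nat_mul_sq_div_sin_sq_le k (π / N),
      (by positivity : 0 ≤ (k : ℝ) ^ 2 * π ^ 2 / (N : ℝ) ^ 2)]

/-- For all `N ≥ 2` and integers `1 ≤ k ≤ N/2`,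
`-k⁴π²/(3N²) ≤ sin²(kπ/N)/sin²(π/N) - k² ≤ k²π²/N²`. -/
theorem eigenvalue_ratio_error_bounds (N k : ℕ) (hN : 2 ≤ N) (hk : 1 ≤ k)
    (hkN : (k : ℝ) ≤ N / 2) :
    -((k : ℝ) ^ 4 * Real.pi ^ 2 / (3 * (N : ℝ) ^ 2))
      ≤ Real.sin (k * Real.pi / N) ^ 2 / Real.sin (Real.pi / N) ^ 2 - (k : ℝ) ^ 2 ∧
    Real.sin (k * Real.pi / N) ^ 2 / Real.sin (Real.pi / N) ^ 2 - (k : ℝ) ^ 2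
      ≤ (k : ℝ) ^ 2 * Real.pi ^ 2 / (N : ℝ) ^ 2 :=
  eigenvalue_ratio_error_bounds_general N k hk hkN
end

section
/- Let μ > 1, N ≥ 2, and for 1 ≤ k ≤ N/2 set u_k^N = 3/(2 + μ sin²(kπ/N)/sin²(π/N)) and v_k = 3/(2 + μk²). Then there exists a constant C depending only on μ such that for all N ≥ 2 and all 1 ≤ k ≤ N/2, |v_k - u_k^N|/(1 - v_k) ≤ C/N². -/
/-!
Write `θ = π / N` and `s = sin² (kθ) / sin² θ`, so that `u_k^N = 3 / (2 + μ s)` and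
`v_k = 3 / (2 + μ k²)`. Then `|v_k - u_k^N| / (1 - v_k) = 3μ |k² - s| / ((2 + μ s)(μ k² - 1))`.
Since `kθ ≤ π / 2`, Jordan's inequality gives `s ≥ 4k² / π²`, so the denominator is at least
`4μ(μ - 1) k⁴ / π²`. The cubic bound `x - x³/6 ≤ sin x ≤ x` gives
`|k² sin² θ - sin² (kθ)| ≤ k⁴θ⁴/3`, hence `|k² - s| ≤ π² k⁴ θ² / 12`. The powers of `k` cancel
and what is left is `π⁶ / (16 (μ - 1) N²)`.
-/

open Real

lemma sq_sub_sin_sq_le {x : ℝ} (hx : 0 ≤ x) : x ^ 2 - sin x ^ 2 ≤ x ^ 4 / 3 := by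
  have h_sub : x - sin x ≤ x ^ 3 / 6 := by linarith [sin_ge_sub_cube hx]
  have h_add : x + sin x ≤ 2 * x := by linarith [sin_le hx]
  have h_add_nonneg : 0 ≤ x + sin x := by
    linarith [neg_abs_le (sin x), abs_sin_le_abs (x := x), abs_of_nonneg hx]
  calc x ^ 2 - sin x ^ 2 = (x - sin x) * (x + sin x) := by ring
    _ ≤ x ^ 3 / 6 * (2 * x) := mul_le_mul h_sub h_add h_add_nonneg (by positivity)
    _ = x ^ 4 / 3 := by ring

lemma abs_mul_sin_sq_sub_sin_mul_sq_le {k θ : ℝ} (hk : 1 ≤ k) (hθ : 0 ≤ θ) :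
    |k ^ 2 * sin θ ^ 2 - sin (k * θ) ^ 2| ≤ k ^ 4 * θ ^ 4 / 3 := by
  have hθ_le := sq_sub_sin_sq_le hθ
  have hkθ_le := sq_sub_sin_sq_le (mul_nonneg (zero_le_one.trans hk) hθ)
  have hθ_nonneg : 0 ≤ θ ^ 2 - sin θ ^ 2 := sub_nonneg.2 sin_sq_le_sq
  have hkθ_nonneg : 0 ≤ (k * θ) ^ 2 - sin (k * θ) ^ 2 := sub_nonneg.2 sin_sq_le_sq
  have hk_pow : k ^ 2 ≤ k ^ 4 := pow_le_pow_right₀ hk (by norm_num)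
  -- `k² sin² θ - sin² (kθ) = ((kθ)² - sin² (kθ)) - k² (θ² - sin² θ)`, a difference of two
  -- quantities in `[0, k⁴θ⁴/3]`.
  rw [abs_le]
  constructor <;> nlinarith [pow_nonneg hθ 4]

lemma abs_sq_sub_sin_sq_div_sin_sq_le {k θ : ℝ} (hk : 1 ≤ k) (hθ : 0 < θ) (hθ' : θ ≤ π / 2) :
    |k ^ 2 - sin (k * θ) ^ 2 / sin θ ^ 2| ≤ π ^ 2 * k ^ 4 * θ ^ 2 / 12 := by
  have h_jordan : 2 / π * θ ≤ sin θ := mul_le_sin hθ.le hθ'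
  have h_sin_pos : 0 < sin θ := lt_of_lt_of_le (by positivity) h_jordan
  rw [show k ^ 2 - sin (k * θ) ^ 2 / sin θ ^ 2
      = (k ^ 2 * sin θ ^ 2 - sin (k * θ) ^ 2) / sin θ ^ 2 by field_simp,
    abs_div, abs_of_pos (pow_pos h_sin_pos 2), div_le_iff₀ (pow_pos h_sin_pos 2)]
  calc |k ^ 2 * sin θ ^ 2 - sin (k * θ) ^ 2| ≤ k ^ 4 * θ ^ 4 / 3 :=
        abs_mul_sin_sq_sub_sin_mul_sq_le hk hθ.le
    _ = π ^ 2 * k ^ 4 * θ ^ 2 / 12 * (2 / π * θ) ^ 2 := by field_simp; ring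
    _ ≤ π ^ 2 * k ^ 4 * θ ^ 2 / 12 * sin θ ^ 2 := by gcongr

lemma mul_sq_le_sin_sq_div_sin_sq {k θ : ℝ} (hk : 1 ≤ k) (hθ : 0 < θ) (hkθ : k * θ ≤ π / 2) :
    4 / π ^ 2 * k ^ 2 ≤ sin (k * θ) ^ 2 / sin θ ^ 2 := by
  have hθ' : θ ≤ π / 2 := le_trans (by nlinarith) hkθ
  have h_sin_pos : 0 < sin θ := lt_of_lt_of_le (by positivity) (mul_le_sin hθ.le hθ')
  rw [le_div_iff₀ (by positivity)]
  calc 4 / π ^ 2 * k ^ 2 * sin θ ^ 2 ≤ 4 / π ^ 2 * k ^ 2 * θ ^ 2 := by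
        gcongr
        exact sin_le hθ.le
    _ = (2 / π * (k * θ)) ^ 2 := by ring
    _ ≤ sin (k * θ) ^ 2 := by
        gcongr
        exact mul_le_sin (by positivity) hkθ

lemma abs_three_div_sub_div_div_one_sub_eq {μ K s : ℝ} (hμ : 0 ≤ μ) (hK : 0 < μ * K - 1)
    (hs : 0 < 2 + μ * s) :
    |3 / (2 + μ * K) - 3 / (2 + μ * s)| / (1 - 3 / (2 + μ * K))
      = 3 * μ * |K - s| / ((2 + μ * s) * (μ * K - 1)) := by
  have hK' : 0 < 2 + μ * K := by linarith
  have h_diff : 3 / (2 + μ * K) - 3 / (2 + μ * s)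
      = 3 * μ * (s - K) / ((2 + μ * K) * (2 + μ * s)) := by
    field_simp
    ring
  have h_one_sub : 1 - 3 / (2 + μ * K) = (μ * K - 1) / (2 + μ * K) := by
    field_simp
    ring
  rw [h_diff, h_one_sub, abs_div, abs_mul (3 * μ), abs_of_nonneg (by positivity : 0 ≤ 3 * μ),
    abs_of_pos (mul_pos hK' hs), abs_sub_comm]
  field_simp

lemma three_div_sub_div_div_one_sub_le {μ K s c ε : ℝ} (hμ : 1 < μ) (hK : 1 ≤ K) (hc : 0 < c)
    (hs : c * K ≤ s) (hε : |K - s| ≤ ε) :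
    |3 / (2 + μ * K) - 3 / (2 + μ * s)| / (1 - 3 / (2 + μ * K))
      ≤ 3 * ε / (c * (μ - 1) * K ^ 2) := by
  have hs_pos : 0 < s := lt_of_lt_of_le (mul_pos hc (by linarith)) hs
  have h_den : μ * (c * K) * ((μ - 1) * K) ≤ (2 + μ * s) * (μ * K - 1) := by
    gcongr <;> nlinarith
  rw [abs_three_div_sub_div_div_one_sub_eq (by linarith) (by nlinarith) (by nlinarith)]
  calc 3 * μ * |K - s| / ((2 + μ * s) * (μ * K - 1))
      ≤ 3 * μ * ε / (μ * (c * K) * ((μ - 1) * K)) := by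
        have : 0 < μ - 1 := by linarith
        have : 0 ≤ ε := (abs_nonneg _).trans hε
        gcongr
    _ = 3 * ε / (c * (μ - 1) * K ^ 2) := by
        have : μ ≠ 0 := by positivity
        field_simp

/-- For `μ > 1` there is a constant `C` (depending only on `μ`) such that for all `N ≥ 2`
and all integers `1 ≤ k ≤ N/2`, with `u_k^N = 3/(2 + μ sin²(kπ/N)/sin²(π/N))` and
`v_k = 3/(2 + μk²)`, one has `|v_k - u_k^N|/(1 - v_k) ≤ C/N²`. -/
theorem uniform_prefactor_term_bound (μ : ℝ) (hμ : 1 < μ) :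
    ∃ C : ℝ, ∀ N k : ℕ, 2 ≤ N → 1 ≤ k → (k : ℝ) ≤ N / 2 →
      |3 / (2 + μ * (k : ℝ) ^ 2)
          - 3 / (2 + μ * (Real.sin (k * Real.pi / N) ^ 2 / Real.sin (Real.pi / N) ^ 2))|
        / (1 - 3 / (2 + μ * (k : ℝ) ^ 2))
      ≤ C / (N : ℝ) ^ 2 := by
  refine ⟨π ^ 6 / (16 * (μ - 1)), fun N k hN hk hkN => ?_⟩
  have hN_pos : (0 : ℝ) < N := by positivity
  have hk_one : (1 : ℝ) ≤ k := by exact_mod_cast hk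
  have hθ : 0 < π / N := by positivity
  have hkθ : (k : ℝ) * (π / N) ≤ π / 2 := by
    calc (k : ℝ) * (π / N) ≤ N / 2 * (π / N) := by gcongr
      _ = π / 2 := by field_simp
  have hθ' : π / N ≤ π / 2 := le_trans (by nlinarith) hkθ
  rw [mul_div_assoc]
  calc _ ≤ 3 * (π ^ 2 * k ^ 4 * (π / N) ^ 2 / 12) / (4 / π ^ 2 * (μ - 1) * ((k : ℝ) ^ 2) ^ 2) :=
        three_div_sub_div_div_one_sub_le hμ (one_le_pow₀ hk_one) (by positivity)
          (mul_sq_le_sin_sq_div_sin_sq hk_one hθ hkθ)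
          (abs_sq_sub_sin_sq_div_sin_sq_le hk_one hθ hθ')
    _ = π ^ 6 / (16 * (μ - 1)) / (N : ℝ) ^ 2 := by
        have : μ - 1 ≠ 0 := by linarith
        field_simp
        ring
end
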